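/- (Achievability of the common information.) Suppose there exist deterministic functions ζ1 : 𝒳 → 𝒴 and ζ2 : 𝒵 → 𝒴 with ζ1(X) = ζ2(Z) almost surely, and write Y = ζ1(X). Then for every t ∈ [0, 1] the triple (t·H(Y), t·H(Y), t·H(Y)) lies in the closure of the set R of achievable triples. -/

import Mathlib

open scoped BigOperators Classical

namespace Biclustering

variable {α β γ : Type*}

/-- A probability mass function on a finite type. -/
def IsPMF [Fintype α] (p : α → ℝ) : Prop := (∀ a, 0 ≤ p a) ∧ ∑ a, p a = 1

/-- Shannon entropy (in nats) of a pmf on a finite type. -/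
noncomputable def ent [Fintype α] (p : α → ℝ) : ℝ := - ∑ a, p a * Real.log (p a)

/-- Pushforward (distribution of `f` under `p`). -/
noncomputable def pmap [Fintype α] (f : α → β) (p : α → ℝ) : β → ℝ :=
  fun b => ∑ a, if f a = b then p a else 0

/-- Entropy of the random variable `f` under the joint pmf `p`. -/
noncomputable def Hof [Fintype α] [Fintype β] (p : α → ℝ) (f : α → β) : ℝ := ent (pmap f p)

/-- Mutual information `I(f; g)` under the joint pmf `p`. -/
noncomputable def MI [Fintype α] [Fintype β] [Fintype γ] (p : α → ℝ) (f : α → β) (g : α → γ) : ℝ :=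
  Hof p f + Hof p g - Hof p (fun a => (f a, g a))

/-- The pmf of `n` i.i.d. copies of a source with pmf `p`. -/
noncomputable def iid [Fintype α] (n : ℕ) (p : α → ℝ) : (Fin n → α) → ℝ :=
  fun x => ∏ i, p (x i)

variable {𝒳 𝒵 : Type} [Fintype 𝒳] [Fintype 𝒵]

/-- `(μ, R1, R2)` is achievable for the two-source biclustering problem with source pmf `p`. -/
def Achievable (p : 𝒳 × 𝒵 → ℝ) (μ R1 R2 : ℝ) : Prop :=
  ∃ (n M1 M2 : ℕ), 0 < n ∧
    Real.log M1 ≤ n * R1 ∧ Real.log M2 ≤ n * R2 ∧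
    ∃ (f : (Fin n → 𝒳) → Fin M1) (g : (Fin n → 𝒵) → Fin M2),
      μ ≤ (MI (iid n p) (fun ω => f (fun i => (ω i).1)) (fun ω => g (fun i => (ω i).2))) / n

/-! Both encoders can compute the common part `Y = ζ1(X) = ζ2(Z)`, so if both apply the same
code `φ` to the first `n ≈ tN` symbols of their block of length `N`, the two messages agree
almost surely and their mutual information is `H(φ(Yⁿ))`. Let `φ` index the typical set
`{y : e^{-n(H+δ)} ≤ P(y) ≤ e^{-n(H-δ)}}` and send every other sequence to one extra symbol.
The typical set has at most `e^{n(H+δ)}` elements, and since `-log P(Yⁿ)` is a sum of `n`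
i.i.d. terms of mean `H` and variance `V`, Chebyshev's inequality shows that it carries
probability at least `1 - V/(nδ²)`; hence `H(φ(Yⁿ)) ≥ n(H-δ) - HV/δ²`. Dividing by `N` and
letting `N → ∞` gives the triple up to `δ`. -/

open Finset Real Filter Topology

section Pushforward

variable [Fintype α]

lemma IsPMF.le_one {p : α → ℝ} (hp : IsPMF p) (a : α) : p a ≤ 1 :=
  hp.2 ▸ single_le_sum (fun b _ => hp.1 b) (mem_univ a)

lemma pmap_apply_eq_sum_mul (f : α → β) (p : α → ℝ) (b : β) :
    pmap f p b = ∑ a, p a * if f a = b then 1 else 0 := by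
  simp only [pmap, mul_ite, mul_one, mul_zero]

lemma sum_pmap [Fintype β] (f : α → β) (p : α → ℝ) : ∑ b, pmap f p b = ∑ a, p a := by
  simp only [pmap]
  rw [Finset.sum_comm]
  simp

lemma IsPMF.pmap [Fintype β] {p : α → ℝ} (hp : IsPMF p) (f : α → β) : IsPMF (pmap f p) :=
  ⟨fun _ => sum_nonneg fun a _ => by split <;> simp [hp.1 a], by rw [sum_pmap, hp.2]⟩

lemma pmap_comp [Fintype β] (f : α → β) (g : β → γ) (p : α → ℝ) :
    pmap (fun a => g (f a)) p = pmap g (pmap f p) := by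
  funext c
  simp only [pmap, ite_sum_zero]
  rw [Finset.sum_comm]
  refine sum_congr rfl fun a _ => ?_
  rw [sum_eq_single (f a) (fun b _ hb => by simp [Ne.symm hb]) (by simp)]
  simp

lemma pmap_congr {f g : α → β} {p : α → ℝ} (hfg : ∀ a, p a ≠ 0 → f a = g a) :
    pmap f p = pmap g p := by
  funext b
  refine sum_congr rfl fun a _ => ?_
  by_cases hpa : p a = 0
  · simp [hpa]
  · rw [hfg a hpa]

lemma ent_eq_sum_negMulLog (p : α → ℝ) : ent p = ∑ a, negMulLog (p a) := by
  simp [ent, negMulLog, neg_mul]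

lemma ent_nonneg {p : α → ℝ} (hp : IsPMF p) : 0 ≤ ent p := by
  rw [ent_eq_sum_negMulLog]
  exact sum_nonneg fun a _ => negMulLog_nonneg (hp.1 a) (hp.le_one a)

lemma ent_pmap_of_injective [Fintype β] {e : α → β} (he : e.Injective) (p : α → ℝ) :
    ent (pmap e p) = ent p := by
  have hval : ∀ a, pmap e p (e a) = p a := fun a => by
    rw [pmap, sum_eq_single a (fun a' _ ha' => by simp [he.ne ha']) (by simp)]
    simp
  have hzero : ∀ b ∉ Set.range e, pmap e p b = 0 := fun b hb =>
    sum_eq_zero fun a _ => if_neg fun h => hb ⟨a, h⟩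
  simp only [ent_eq_sum_negMulLog]
  exact (Fintype.sum_of_injective e he _ _ (fun b hb => by simp [hzero b hb])
    (fun a => by rw [hval])).symm

lemma MI_eq_Hof_of_ae_eq [Fintype β] {p : α → ℝ} {f g : α → β}
    (hfg : ∀ a, p a ≠ 0 → f a = g a) : MI p f g = Hof p f := by
  have hg : Hof p g = Hof p f := by rw [Hof, Hof, pmap_congr hfg]
  have hpair : Hof p (fun a => (f a, g a)) = Hof p f := by
    rw [Hof, pmap_congr (g := fun a => (f a, f a)) fun a ha => by rw [hfg a ha],
      pmap_comp f (fun b => (b, b)), ent_pmap_of_injective fun b b' h => congrArg Prod.fst h, Hof]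
  rw [MI, hg, hpair]
  ring

end Pushforward

section Iid

variable [Fintype α] {q : α → ℝ}

lemma IsPMF.iid (hq : IsPMF q) (n : ℕ) : IsPMF (iid n q) := by
  refine ⟨fun ω => prod_nonneg fun i _ => hq.1 (ω i), ?_⟩
  simp only [Biclustering.iid]
  rw [← Fintype.prod_sum (fun _ a => q a)]
  simp [hq.2]

lemma log_iid {n : ℕ} {ω : Fin n → α} (hω : iid n q ω ≠ 0) :
    log (iid n q ω) = ∑ i, log (q (ω i)) :=
  log_prod fun i _ hi => hω (prod_eq_zero (mem_univ i) hi)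

lemma sum_iid_mul_prod {n : ℕ} (F : Fin n → α → ℝ) :
    ∑ ω, iid n q ω * ∏ i, F i (ω i) = ∏ i, ∑ a, q a * F i a := by
  simp only [Biclustering.iid, ← prod_mul_distrib]
  exact (Fintype.prod_sum fun i a => q a * F i a).symm

lemma pmap_iid_castAdd [Fintype β] (hq : ∑ a, q a = 1) (h : α → β) (n k : ℕ) :
    pmap (fun ω (i : Fin n) => h (ω (Fin.castAdd k i))) (iid (n + k) q) = iid n (pmap h q) := by
  funext y
  let F : Fin (n + k) → α → ℝ :=
    Fin.addCases (fun i a => if h a = y i then 1 else 0) fun _ _ => 1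
  calc pmap (fun ω (i : Fin n) => h (ω (Fin.castAdd k i))) (iid (n + k) q) y
      = ∑ ω, iid (n + k) q ω * ∏ j, F j (ω j) := by
        rw [pmap_apply_eq_sum_mul]
        refine sum_congr rfl fun ω _ => congrArg _ ?_
        simp [F, Fin.prod_univ_add, Fintype.prod_boole, funext_iff]
    _ = ∏ j, ∑ a, q a * F j a := sum_iid_mul_prod F
    _ = iid n (pmap h q) y := by
        simp [F, Fin.prod_univ_add, hq, Biclustering.iid, pmap_apply_eq_sum_mul]

lemma sum_iid_mul_apply (hq : ∑ a, q a = 1) {n : ℕ} (i : Fin n) (f : α → ℝ) :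
    ∑ ω, iid n q ω * f (ω i) = ∑ a, q a * f a := by
  have h := sum_iid_mul_prod (q := q) fun j a => if j = i then f a else 1
  simp only [Fintype.prod_ite_eq'] at h
  rw [h, ← Fintype.prod_ite_eq' i fun _ => ∑ a, q a * f a]
  refine prod_congr rfl fun j _ => ?_
  split_ifs <;> simp [hq]

lemma sum_iid_mul_apply_mul_apply (hq : ∑ a, q a = 1) {n : ℕ} {i j : Fin n} (hij : i ≠ j)
    (f g : α → ℝ) :
    ∑ ω, iid n q ω * (f (ω i) * g (ω j)) = (∑ a, q a * f a) * ∑ a, q a * g a := by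
  have h := sum_iid_mul_prod (q := q) fun k a =>
    (if k = i then f a else 1) * (if k = j then g a else 1)
  simp only [prod_mul_distrib, Fintype.prod_ite_eq'] at h
  rw [h, ← Fintype.prod_ite_eq' i fun _ => ∑ a, q a * f a,
    ← Fintype.prod_ite_eq' j fun _ => ∑ a, q a * g a, ← prod_mul_distrib]
  refine prod_congr rfl fun k _ => ?_
  by_cases hki : k = i
  · subst hki
    simp [hij]
  · by_cases hkj : k = j
    · subst hkj
      simp [hki]
    · simp [hki, hkj, hq]

lemma sum_iid_mul_sum_sq (hq : ∑ a, q a = 1) {g : α → ℝ} (hg : ∑ a, q a * g a = 0) (n : ℕ) :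
    ∑ ω, iid n q ω * (∑ i, g (ω i)) ^ 2 = n * ∑ a, q a * g a ^ 2 := by
  calc ∑ ω, iid n q ω * (∑ i, g (ω i)) ^ 2
      = ∑ ω, ∑ i, ∑ j, iid n q ω * (g (ω i) * g (ω j)) := by
        refine sum_congr rfl fun ω _ => ?_
        rw [sq, sum_mul_sum, mul_sum]
        simp only [mul_sum]
    _ = ∑ i, ∑ j, ∑ ω, iid n q ω * (g (ω i) * g (ω j)) := by
        rw [sum_comm]
        exact sum_congr rfl fun i _ => sum_comm
    _ = ∑ _i : Fin n, ∑ a, q a * g a ^ 2 := by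
        refine sum_congr rfl fun i _ => ?_
        rw [sum_eq_single i (fun j _ hji => by
          rw [sum_iid_mul_apply_mul_apply hq (Ne.symm hji), hg, zero_mul]) (by simp)]
        simp only [← sq]
        exact sum_iid_mul_apply hq i fun a => g a ^ 2
    _ = n * ∑ a, q a * g a ^ 2 := by simp

end Iid

section TypicalSet

variable [Fintype α] {q : α → ℝ}

noncomputable def varentropy (q : α → ℝ) : ℝ := ∑ a, q a * (-log (q a) - ent q) ^ 2

lemma varentropy_nonneg (hq : IsPMF q) : 0 ≤ varentropy q :=
  sum_nonneg fun a _ => mul_nonneg (hq.1 a) (sq_nonneg _)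

lemma sum_mul_neg_log_sub_ent (hq : IsPMF q) : ∑ a, q a * (-log (q a) - ent q) = 0 := by
  simp only [mul_sub, sum_sub_distrib, ← sum_mul, hq.2, ent, mul_neg, sum_neg_distrib]
  ring

noncomputable def typicalSet (q : α → ℝ) (n : ℕ) (δ : ℝ) : Finset (Fin n → α) :=
  {ω | exp (-(n * (ent q + δ))) ≤ iid n q ω ∧ iid n q ω ≤ exp (-(n * (ent q - δ)))}

lemma card_typicalSet_le (hq : IsPMF q) (n : ℕ) (δ : ℝ) :
    ((typicalSet q n δ).card : ℝ) ≤ exp (n * (ent q + δ)) := by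
  have hQ := hq.iid n
  have hlower : (typicalSet q n δ).card • exp (-(n * (ent q + δ))) ≤
      ∑ ω ∈ typicalSet q n δ, iid n q ω :=
    card_nsmul_le_sum _ _ _ fun ω hω => (mem_filter.1 hω).2.1
  have hle_one : ∑ ω ∈ typicalSet q n δ, iid n q ω ≤ 1 :=
    hQ.2 ▸ sum_le_sum_of_subset_of_nonneg (subset_univ _) fun ω _ _ => hQ.1 ω
  rw [nsmul_eq_mul] at hlower
  calc ((typicalSet q n δ).card : ℝ)
      = (typicalSet q n δ).card * exp (-(n * (ent q + δ))) * exp (n * (ent q + δ)) := by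
        rw [mul_assoc, ← exp_add, neg_add_cancel, exp_zero, mul_one]
    _ ≤ 1 * exp (n * (ent q + δ)) := by gcongr; linarith
    _ = exp (n * (ent q + δ)) := one_mul _

lemma iid_mul_le_negMulLog_of_mem_typicalSet {n : ℕ} {δ : ℝ} {ω : Fin n → α}
    (hω : ω ∈ typicalSet q n δ) : iid n q ω * (n * (ent q - δ)) ≤ negMulLog (iid n q ω) := by
  obtain ⟨hlo, hhi⟩ := (mem_filter.1 hω).2
  have hpos : 0 < iid n q ω := (exp_pos _).trans_le hlo
  have hlog : n * (ent q - δ) ≤ -log (iid n q ω) := by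
    linarith [(log_le_iff_le_exp hpos).2 hhi]
  rw [negMulLog, neg_mul, ← mul_neg]
  exact mul_le_mul_of_nonneg_left hlog hpos.le

lemma sq_le_sq_sum_of_notMem_typicalSet {n : ℕ} {δ : ℝ} (hδ : 0 < δ) {ω : Fin n → α}
    (hω : ω ∉ typicalSet q n δ) (hpos : 0 < iid n q ω) :
    (n * δ) ^ 2 ≤ (∑ i, (-log (q (ω i)) - ent q)) ^ 2 := by
  have hsum : ∑ i, (-log (q (ω i)) - ent q) = -log (iid n q ω) - n * ent q := by
    simp [sum_sub_distrib, log_iid hpos.ne']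
  have hnδ : 0 ≤ n * δ := by positivity
  simp only [typicalSet, mem_filter, mem_univ, true_and, not_and_or, not_le] at hω
  rw [hsum]
  rcases hω with hlo | hhi
  · have := (log_lt_iff_lt_exp hpos).2 hlo
    nlinarith
  · have := (lt_log_iff_exp_lt hpos).2 hhi
    nlinarith

lemma mul_sum_compl_typicalSet_le (hq : IsPMF q) (n : ℕ) {δ : ℝ} (hδ : 0 < δ) :
    n * δ ^ 2 * ∑ ω ∈ (typicalSet q n δ)ᶜ, iid n q ω ≤ varentropy q := by
  have hQ := hq.iid n
  set S : (Fin n → α) → ℝ := fun ω => ∑ i, (-log (q (ω i)) - ent q)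
  have hcheb : (n * δ) ^ 2 * ∑ ω ∈ (typicalSet q n δ)ᶜ, iid n q ω ≤ n * varentropy q :=
    calc (n * δ) ^ 2 * ∑ ω ∈ (typicalSet q n δ)ᶜ, iid n q ω
        ≤ ∑ ω ∈ (typicalSet q n δ)ᶜ, iid n q ω * S ω ^ 2 := by
          rw [mul_sum]
          refine sum_le_sum fun ω hω => ?_
          rcases (hQ.1 ω).eq_or_lt with h0 | hpos
          · simp [← h0]
          · rw [mul_comm]
            exact mul_le_mul_of_nonneg_left
              (sq_le_sq_sum_of_notMem_typicalSet hδ (mem_compl.1 hω) hpos) hpos.le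
      _ ≤ ∑ ω, iid n q ω * S ω ^ 2 :=
          sum_le_sum_of_subset_of_nonneg (subset_univ _) fun ω _ _ =>
            mul_nonneg (hQ.1 ω) (sq_nonneg _)
      _ = n * varentropy q := sum_iid_mul_sum_sq hq.2 (sum_mul_neg_log_sub_ent hq) n
  rcases n.eq_zero_or_pos with rfl | hn
  · simpa using varentropy_nonneg hq
  · have hn' : (0 : ℝ) < n := Nat.cast_pos.2 hn
    nlinarith

end TypicalSet

section IndexCode

variable {σ τ : Type*}

lemma sum_negMulLog_le_ent_pmap [Fintype σ] [Fintype τ] {Q : σ → ℝ} (hQ : IsPMF Q) {φ : σ → τ}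
    {A : Finset σ} (hφ : ∀ ω ∈ A, ∀ ω', φ ω' = φ ω → ω' = ω) :
    ∑ ω ∈ A, negMulLog (Q ω) ≤ ent (pmap φ Q) := by
  have hR := hQ.pmap φ
  have hval : ∀ ω ∈ A, pmap φ Q (φ ω) = Q ω := fun ω hω => by
    rw [pmap, sum_eq_single ω (fun ω' _ hne => if_neg fun h => hne (hφ ω hω ω' h)) (by simp)]
    simp
  calc ∑ ω ∈ A, negMulLog (Q ω)
      = ∑ b ∈ A.image φ, negMulLog (pmap φ Q b) := by
        rw [sum_image fun ω hω ω' _ h => (hφ ω hω ω' h.symm).symm]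
        exact sum_congr rfl fun ω hω => by rw [hval ω hω]
    _ ≤ ∑ b, negMulLog (pmap φ Q b) :=
        sum_le_sum_of_subset_of_nonneg (subset_univ _) fun b _ _ =>
          negMulLog_nonneg (hR.1 b) (hR.le_one b)
    _ = ent (pmap φ Q) := (ent_eq_sum_negMulLog _).symm

noncomputable def indexCode (A : Finset σ) (ω : σ) : Fin (A.card + 1) :=
  if h : ω ∈ A then (A.equivFin ⟨ω, h⟩).castSucc else Fin.last _

lemma eq_of_indexCode_eq {A : Finset σ} {ω ω' : σ} (hω : ω ∈ A)
    (h : indexCode A ω' = indexCode A ω) : ω' = ω := by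
  unfold indexCode at h
  rw [dif_pos hω] at h
  split_ifs at h with hω'
  · simpa using A.equivFin.injective (Fin.castSucc_injective _ h)
  · exact absurd h.symm (Fin.castSucc_lt_last _).ne

end IndexCode

theorem exists_code_ent_iid_ge [Fintype α] {q : α → ℝ} (hq : IsPMF q) (n : ℕ) {δ : ℝ}
    (hδ : 0 < δ) :
    ∃ (M : ℕ) (φ : (Fin n → α) → Fin M), log M ≤ log 2 + n * (ent q + δ) ∧
      n * (ent q - δ) - ent q * varentropy q / δ ^ 2 ≤ ent (pmap φ (iid n q)) := by
  set A := typicalSet q n δ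
  have hH := ent_nonneg hq
  refine ⟨A.card + 1, indexCode A, ?_, ?_⟩
  · have hexp : 1 ≤ exp (n * (ent q + δ)) := one_le_exp (by positivity)
    have hcard := card_typicalSet_le hq n δ
    calc log ((A.card + 1 : ℕ) : ℝ) ≤ log (2 * exp (n * (ent q + δ))) := by
          gcongr
          push_cast
          linarith
      _ = log 2 + n * (ent q + δ) := by rw [log_mul two_ne_zero (exp_pos _).ne', log_exp]
  · have hQ := hq.iid n
    set P := ∑ ω ∈ A, iid n q ω
    set Pc := ∑ ω ∈ Aᶜ, iid n q ω
    have hsplit : P + Pc = 1 := by rw [sum_add_sum_compl, hQ.2]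
    have hPc : 0 ≤ Pc := sum_nonneg fun ω _ => hQ.1 ω
    have hcheb : n * Pc * ent q ≤ ent q * varentropy q / δ ^ 2 := by
      rw [le_div_iff₀ (by positivity)]
      nlinarith [mul_sum_compl_typicalSet_le hq n hδ]
    calc n * (ent q - δ) - ent q * varentropy q / δ ^ 2
        ≤ P * (n * (ent q - δ)) := by
          -- `P * n(H - δ) = n(H - δ) - Pc * nH + Pc * nδ`, and `hcheb` bounds `Pc * nH`
          have : 0 ≤ Pc * n * δ := by positivity
          rw [show P = 1 - Pc by linarith]
          linarith
      _ ≤ ∑ ω ∈ A, negMulLog (iid n q ω) := by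
          rw [sum_mul]
          exact sum_le_sum fun ω hω => iid_mul_le_negMulLog_of_mem_typicalSet hω
      _ ≤ ent (pmap (indexCode A) (iid n q)) :=
          sum_negMulLog_le_ent_pmap hQ fun ω hω ω' h => eq_of_indexCode_eq hω h

section Achievability

lemma Achievable.mono {p : 𝒳 × 𝒵 → ℝ} {μ R1 R2 μ' R1' R2' : ℝ} (h : Achievable p μ R1 R2)
    (hμ : μ' ≤ μ) (hR1 : R1 ≤ R1') (hR2 : R2 ≤ R2') : Achievable p μ' R1' R2' := by
  obtain ⟨n, M1, M2, hn, h1, h2, f, g, hfg⟩ := h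
  exact ⟨n, M1, M2, hn, h1.trans (by gcongr), h2.trans (by gcongr), f, g, hμ.trans hfg⟩

theorem achievable_of_common_function {𝒴 : Type} [Fintype 𝒴] {p : 𝒳 × 𝒵 → ℝ} (hp : IsPMF p)
    {ζ1 : 𝒳 → 𝒴} {ζ2 : 𝒵 → 𝒴} (hcommon : ∀ x z, p (x, z) ≠ 0 → ζ1 x = ζ2 z)
    {n N : ℕ} (hN : 0 < N) (hnN : n ≤ N) {δ : ℝ} (hδ : 0 < δ) :
    Achievable p
      ((n * (Hof p (fun w => ζ1 w.1) - δ) -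
        Hof p (fun w => ζ1 w.1) * varentropy (pmap (fun w => ζ1 w.1) p) / δ ^ 2) / N)
      ((log 2 + n * (Hof p (fun w => ζ1 w.1) + δ)) / N)
      ((log 2 + n * (Hof p (fun w => ζ1 w.1) + δ)) / N) := by
  obtain ⟨k, rfl⟩ := Nat.exists_eq_add_of_le hnN
  obtain ⟨M, φ, hrate, hent⟩ := exists_code_ent_iid_ge (hp.pmap fun w => ζ1 w.1) n hδ
  have hN' : (0 : ℝ) < (n + k : ℕ) := Nat.cast_pos.2 hN
  have hae : ∀ ω : Fin (n + k) → 𝒳 × 𝒵, iid (n + k) p ω ≠ 0 →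
      φ (fun i => ζ1 (ω (Fin.castAdd k i)).1) = φ (fun i => ζ2 (ω (Fin.castAdd k i)).2) :=
    fun ω hω => congrArg φ <| funext fun i =>
      hcommon _ _ fun h => hω <| prod_eq_zero (mem_univ _) (by simpa using h)
  have hMI : MI (iid (n + k) p) (fun ω => φ (fun i => ζ1 (ω (Fin.castAdd k i)).1))
      (fun ω => φ (fun i => ζ2 (ω (Fin.castAdd k i)).2)) =
        ent (pmap φ (iid n (pmap (fun w => ζ1 w.1) p))) := by
    rw [MI_eq_Hof_of_ae_eq hae, Hof,
      pmap_comp (fun (ω : Fin (n + k) → 𝒳 × 𝒵) (i : Fin n) => ζ1 (ω (Fin.castAdd k i)).1) φ,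
      pmap_iid_castAdd hp.2 (fun w => ζ1 w.1) n k]
  refine ⟨n + k, M, M, hN, ?_, ?_, fun x => φ fun i => ζ1 (x (Fin.castAdd k i)),
    fun z => φ fun i => ζ2 (z (Fin.castAdd k i)), ?_⟩
  · rwa [mul_div_cancel₀ _ hN'.ne']
  · rwa [mul_div_cancel₀ _ hN'.ne']
  · rw [hMI]
    gcongr
    exact hent

theorem achievable_mul_Hof_sub_add {𝒴 : Type} [Fintype 𝒴] {p : 𝒳 × 𝒵 → ℝ} (hp : IsPMF p)
    {ζ1 : 𝒳 → 𝒴} {ζ2 : 𝒵 → 𝒴} (hcommon : ∀ x z, p (x, z) ≠ 0 → ζ1 x = ζ2 z)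
    {t : ℝ} (ht0 : 0 ≤ t) (ht1 : t ≤ 1) {ε : ℝ} (hε : 0 < ε) :
    Achievable p (t * Hof p (fun w => ζ1 w.1) - ε) (t * Hof p (fun w => ζ1 w.1) + ε)
      (t * Hof p (fun w => ζ1 w.1) + ε) := by
  set H := Hof p (fun w => ζ1 w.1)
  set V := varentropy (pmap (fun w => ζ1 w.1) p)
  have hceil : Tendsto (fun N : ℕ => (⌈t * N⌉₊ : ℝ) / N) atTop (𝓝 t) :=
    (tendsto_nat_ceil_mul_div_atTop ht0).comp tendsto_natCast_atTop_atTop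
  have hinv : Tendsto (fun N : ℕ => (1 : ℝ) / N) atTop (𝓝 0) :=
    tendsto_const_div_atTop_nhds_zero_nat 1
  have hμ : Tendsto (fun N : ℕ => (⌈t * N⌉₊ * (H - ε / 2) - H * V / (ε / 2) ^ 2) / N)
      atTop (𝓝 (t * (H - ε / 2))) := by
    have h := (hceil.mul_const (H - ε / 2)).sub (hinv.const_mul (H * V / (ε / 2) ^ 2))
    rw [mul_zero, sub_zero] at h
    exact h.congr fun N => by ring
  have hR : Tendsto (fun N : ℕ => (log 2 + ⌈t * N⌉₊ * (H + ε / 2)) / N)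
      atTop (𝓝 (t * (H + ε / 2))) := by
    have h := (hinv.const_mul (log 2)).add (hceil.mul_const (H + ε / 2))
    rw [mul_zero, zero_add] at h
    exact h.congr fun N => by ring
  have hlo : t * H - ε < t * (H - ε / 2) := by nlinarith
  have hhi : t * (H + ε / 2) < t * H + ε := by nlinarith
  obtain ⟨N, hμN, hRN, hN⟩ := ((hμ.eventually (lt_mem_nhds hlo)).and
    ((hR.eventually (gt_mem_nhds hhi)).and (eventually_gt_atTop 0))).exists
  have hnN : ⌈t * N⌉₊ ≤ N := Nat.ceil_le.2 (mul_le_of_le_one_left N.cast_nonneg ht1)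
  exact (achievable_of_common_function hp hcommon hN hnN (half_pos hε)).mono
    hμN.le hRN.le hRN.le

end Achievability

/-- **Achievability of the common information:** if `ζ1(X) = ζ2(Z)` almost surely, then with
`Y = ζ1(X)`, for every `t ∈ [0, 1]` the triple `(t·H(Y), t·H(Y), t·H(Y))` lies in the
closure of the achievable region. -/
theorem common_information_achievable
    (p : 𝒳 × 𝒵 → ℝ) (hp : IsPMF p)
    {𝒴 : Type} [Fintype 𝒴] (ζ1 : 𝒳 → 𝒴) (ζ2 : 𝒵 → 𝒴)
    (hcommon : ∀ x z, p (x, z) ≠ 0 → ζ1 x = ζ2 z)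
    (t : ℝ) (ht0 : 0 ≤ t) (ht1 : t ≤ 1) :
    (t * Hof p (fun w => ζ1 w.1), t * Hof p (fun w => ζ1 w.1), t * Hof p (fun w => ζ1 w.1))
      ∈ closure { s : ℝ × ℝ × ℝ | Achievable p s.1 s.2.1 s.2.2 } := by
  set H := Hof p (fun w => ζ1 w.1)
  have hcont : Continuous fun ε : ℝ => (t * H - ε, t * H + ε, t * H + ε) := by fun_prop
  refine mem_closure_of_tendsto (f := fun ε : ℝ => (t * H - ε, t * H + ε, t * H + ε))
    (b := 𝓝[>] 0) ?_ (eventually_nhdsWithin_of_forall fun ε hε =>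
      achievable_mul_Hof_sub_add hp hcommon ht0 ht1 hε)
  simpa using (hcont.tendsto 0).mono_left nhdsWithin_le_nhds

end Biclustering
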